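/- Let q be a prime power, F_q ⊆ F_{q^N}, let k ≤ m ≤ N, and let g_1, …, g_m ∈ F_{q^N} be linearly independent over F_q. Partition {1, …, m} into disjoint groups G_1, …, G_s and set p_i = ∑_{l ∈ G_i} g_l. For a nonzero linearized polynomial f of q-degree at most k − 1, the extended codeword c = (f(g_1), …, f(g_m), f(p_1), …, f(p_s)) ∈ (F_{q^N})^{m+s} has rank weight at least m − k + 1. Consequently, if the minimum rank distance δ = m − k + 1 of the underlying Gabidulin code satisfies δ ≥ 2t + 1, then for any such codeword c, any e ∈ (F_{q^N})^t, and any t × (m + s) matrix B over F_q, c is the unique codeword of the locally repairable code at rank distance at most t from c + eB; i.e., the locally repairable code C^loc tolerates up to t static adversarial errors. -/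

import Mathlib

/-!
The map `x ↦ ∑ aᵢ x^(q^i)` is `F_q`-linear, being an `F_{q^N}`-combination of powers of the
Frobenius. For `a ≠ 0` its kernel consists of roots of a nonzero polynomial of degree at most
`q^(k-1)`, so it has at most `q^(k-1)` elements, i.e. `F_q`-dimension at most `k - 1`.
Rank–nullity on the span of the linearly independent `g_l` then gives rank weight at least
`m - k + 1` already on the first `m` coordinates. The encoding is additive in `a`, so this is the
minimum rank distance of `C^loc`. An error `eB` has rank weight at most `t`, and two codewords
within rank distance `t` of the same word are at distance at most `2t < m - k + 1`, hence equal.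
-/

/-- The rank weight of a vector with coordinates in `F_{q^N}`: the dimension over `F_q` of
the `F_q`-linear span in `F_{q^N}` of the coordinates. -/
noncomputable def rankWeight (Fq : Type) [Field Fq] {FqN : Type} [Field FqN]
    [Algebra Fq FqN] {ι : Type} (x : ι → FqN) : ℕ :=
  Module.finrank Fq ↥(Submodule.span Fq (Set.range x))

open Polynomial Module

instance finiteDimensional_span_range {K V ι : Type} [DivisionRing K] [AddCommGroup V]
    [Module K V] [Finite ι] (x : ι → V) :
    FiniteDimensional K (Submodule.span K (Set.range x)) :=
  FiniteDimensional.span_of_finite K (Set.finite_range x)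

section RankWeight

variable {K L : Type} [Field K] [Field L] [Algebra K L] {ι κ : Type}

lemma rankWeight_comp_le [Finite κ] (x : κ → L) (f : ι → κ) :
    rankWeight K (x ∘ f) ≤ rankWeight K x :=
  Submodule.finrank_mono (Submodule.span_mono (Set.range_comp_subset_range f x))

lemma rankWeight_le_card [Fintype ι] (x : ι → L) : rankWeight K x ≤ Fintype.card ι :=
  finrank_range_le_card x

lemma rankWeight_add_le [Finite ι] (x y : ι → L) :
    rankWeight K (x + y) ≤ rankWeight K x + rankWeight K y := by
  have hle : Submodule.span K (Set.range (x + y)) ≤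
      Submodule.span K (Set.range x) ⊔ Submodule.span K (Set.range y) := by
    rw [Submodule.span_le]
    rintro - ⟨i, rfl⟩
    exact Submodule.add_mem_sup (Submodule.subset_span ⟨i, rfl⟩)
      (Submodule.subset_span ⟨i, rfl⟩)
  exact (Submodule.finrank_mono hle).trans
    (Submodule.finrank_add_le_finrank_add_finrank _ _)

lemma rankWeight_neg (x : ι → L) : rankWeight K (-x) = rankWeight K x := by
  rw [rankWeight, rankWeight, ← Submodule.span_neg (Set.range x), Set.neg_range]
  rfl

lemma rankWeight_sub_comm (x y : ι → L) : rankWeight K (x - y) = rankWeight K (y - x) := by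
  rw [← neg_sub, rankWeight_neg]

lemma rankWeight_sub_le_add [Finite ι] (x y z : ι → L) :
    rankWeight K (x - z) ≤ rankWeight K (x - y) + rankWeight K (y - z) := by
  simpa using rankWeight_add_le (K := K) (x - y) (y - z)

lemma rankWeight_sum_mul_algebraMap_le [Finite ι] {τ : Type} [Fintype τ] (e : τ → L)
    (B : τ → ι → K) :
    rankWeight K (fun x => ∑ i, e i * algebraMap K L (B i x)) ≤ rankWeight K e := by
  refine Submodule.finrank_mono (Submodule.span_le.mpr ?_)
  rintro - ⟨x, rfl⟩
  refine Submodule.sum_mem _ fun i _ => ?_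
  rw [mul_comm, ← Algebra.smul_def]
  exact Submodule.smul_mem _ _ (Submodule.subset_span ⟨i, rfl⟩)

lemma eq_of_rankWeight_sub_le [Finite ι] {C : Set (ι → L)} {t : ℕ}
    (hC : ∀ c ∈ C, ∀ c' ∈ C, c ≠ c' → 2 * t + 1 ≤ rankWeight K (c - c'))
    {r c c' : ι → L} (hc : c ∈ C) (hc' : c' ∈ C)
    (hrc : rankWeight K (r - c) ≤ t) (hrc' : rankWeight K (r - c') ≤ t) : c = c' := by
  by_contra hne
  have := rankWeight_sub_le_add (K := K) c r c'
  rw [rankWeight_sub_comm c r] at this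
  have := hC c hc c' hc' hne
  omega

end RankWeight

section LinearizedPolynomial

variable {L : Type} [Semiring L] {k : ℕ}

noncomputable def linearizedPoly (q : ℕ) (a : Fin k → L) : L[X] :=
  ∑ i, C (a i) * X ^ q ^ (i : ℕ)

lemma eval_linearizedPoly (q : ℕ) (a : Fin k → L) (x : L) :
    (linearizedPoly q a).eval x = ∑ i, a i * x ^ q ^ (i : ℕ) := by
  simp [linearizedPoly, eval_finsetSum]

lemma coeff_linearizedPoly_pow {q : ℕ} (hq : 1 < q) (a : Fin k → L) (j : Fin k) :
    (linearizedPoly q a).coeff (q ^ (j : ℕ)) = a j := by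
  rw [linearizedPoly, finsetSum_coeff, Finset.sum_eq_single j]
  · simp
  · intro i _ hij
    have hne : q ^ (j : ℕ) ≠ q ^ (i : ℕ) :=
      fun h => hij (Fin.ext (Nat.pow_right_injective hq h)).symm
    rw [coeff_C_mul, coeff_X_pow, if_neg hne, mul_zero]
  · simp

lemma linearizedPoly_ne_zero {q : ℕ} (hq : 1 < q) {a : Fin k → L} (ha : a ≠ 0) :
    linearizedPoly q a ≠ 0 := by
  obtain ⟨j, hj⟩ := Function.ne_iff.mp ha
  intro h
  exact hj (by simpa [h] using (coeff_linearizedPoly_pow hq a j).symm)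

lemma natDegree_linearizedPoly_le {q : ℕ} (hq : 0 < q) (a : Fin k → L) :
    (linearizedPoly q a).natDegree ≤ q ^ (k - 1) := by
  refine natDegree_sum_le_of_forall_le _ _ fun i _ => (natDegree_C_mul_le _ _).trans ?_
  exact (natDegree_X_pow_le _).trans (Nat.pow_le_pow_right hq (by omega))

end LinearizedPolynomial

section Roots

variable {K L : Type} [Field K] [CommRing L] [IsDomain L] [Module K L]

lemma Submodule.finite_of_forall_isRoot {W : Submodule K L} {P : L[X]} (hP : P ≠ 0)
    (hW : ∀ x ∈ W, P.IsRoot x) : Finite W :=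
  ((finite_setOfPred_isRoot hP).subset hW).to_subtype

lemma Submodule.finrank_le_of_forall_isRoot [Fintype K] {W : Submodule K L} {P : L[X]} {d : ℕ}
    (hP : P ≠ 0) (hdeg : P.natDegree ≤ Fintype.card K ^ d) (hW : ∀ x ∈ W, P.IsRoot x) :
    finrank K W ≤ d := by
  have hfin : (W : Set L).Finite := (finite_setOfPred_isRoot hP).subset hW
  have := hfin.to_subtype
  have hcard : Nat.card W ≤ P.natDegree := by
    change Nat.card (W : Set L) ≤ _
    rw [Nat.card_coe_set_eq, Set.ncard_eq_toFinset_card _ hfin]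
    exact card_le_degree_of_subset_roots fun x hx =>
      (mem_roots hP).mpr (hW x ((Set.Finite.mem_toFinset hfin).mp hx))
  rw [Module.natCard_eq_pow_finrank (K := K), Nat.card_eq_fintype_card] at hcard
  exact (Nat.pow_le_pow_iff_right Fintype.one_lt_card).mp (hcard.trans hdeg)

end Roots

section LinearizedMap

variable {K L : Type} [Field K] [Fintype K] [CommRing L] [Algebra K L] {k : ℕ}

variable (K) in
noncomputable def linearizedMap (a : Fin k → L) : L →ₗ[K] L :=
  ∑ i, a i • (FiniteField.frobeniusAlgHom K L ^ (i : ℕ)).toLinearMap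

lemma linearizedMap_apply (a : Fin k → L) (x : L) :
    linearizedMap K a x = ∑ i, a i * x ^ Fintype.card K ^ (i : ℕ) := by
  simp [linearizedMap, AlgHom.coe_pow, FiniteField.coe_frobeniusAlgHom, pow_iterate]

lemma isRoot_linearizedPoly_of_mem_ker [IsDomain L] {a : Fin k → L} {x : L}
    (hx : x ∈ LinearMap.ker (linearizedMap K a)) :
    (linearizedPoly (Fintype.card K) a).IsRoot x := by
  rw [LinearMap.mem_ker, linearizedMap_apply] at hx
  rw [IsRoot, eval_linearizedPoly, hx]

lemma finite_ker_linearizedMap [IsDomain L] {a : Fin k → L} (ha : a ≠ 0) :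
    Finite (LinearMap.ker (linearizedMap K a)) :=
  Submodule.finite_of_forall_isRoot (linearizedPoly_ne_zero Fintype.one_lt_card ha)
    fun _ => isRoot_linearizedPoly_of_mem_ker

lemma finrank_ker_linearizedMap_le [IsDomain L] {a : Fin k → L} (ha : a ≠ 0) :
    finrank K (LinearMap.ker (linearizedMap K a)) ≤ k - 1 :=
  Submodule.finrank_le_of_forall_isRoot (linearizedPoly_ne_zero Fintype.one_lt_card ha)
    (natDegree_linearizedPoly_le Fintype.card_pos a) fun _ => isRoot_linearizedPoly_of_mem_ker

end LinearizedMap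

lemma card_le_rankWeight_comp_add_finrank_ker {K V L ι : Type} [Field K] [AddCommGroup V]
    [Module K V] [Field L] [Algebra K L] [Fintype ι] (f : V →ₗ[K] L)
    [FiniteDimensional K (LinearMap.ker f)] {g : ι → V} (hg : LinearIndependent K g) :
    Fintype.card ι ≤ rankWeight K (f ∘ g) + finrank K (LinearMap.ker f) := by
  set W := Submodule.span K (Set.range g)
  have hrange : LinearMap.range (f ∘ₗ W.subtype) = Submodule.span K (Set.range (f ∘ g)) := by
    rw [LinearMap.range_comp, Submodule.range_subtype, Submodule.map_span, ← Set.range_comp]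
  have hker : finrank K (LinearMap.ker (f ∘ₗ W.subtype)) ≤ finrank K (LinearMap.ker f) := by
    rw [(Submodule.equivMapOfInjective W.subtype W.injective_subtype _).finrank_eq]
    exact Submodule.finrank_mono (by rw [LinearMap.ker_comp]; exact Submodule.map_comap_le _ _)
  have := (f ∘ₗ W.subtype).finrank_range_add_finrank_ker
  rw [hrange, finrank_span_eq_card hg] at this
  rw [rankWeight]
  omega

lemma sub_add_one_le_rankWeight_linearizedMap {K L : Type} [Field K] [Fintype K] [Field L]
    [Algebra K L] {k m : ℕ} (hkm : k ≤ m) {g : Fin m → L} (hg : LinearIndependent K g)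
    {a : Fin k → L} (ha : a ≠ 0) : m - k + 1 ≤ rankWeight K (linearizedMap K a ∘ g) := by
  have hk : 0 < k := Nat.pos_of_ne_zero fun hk => ha (funext fun i => (hk ▸ i).elim0)
  have := finite_ker_linearizedMap (K := K) ha
  have := card_le_rankWeight_comp_add_finrank_ker (linearizedMap K a) hg
  have := finrank_ker_linearizedMap_le (K := K) ha
  rw [Fintype.card_fin] at *
  omega

theorem locally_repairable_code_static_error_tolerance_general
    (q m s k t : ℕ)
    (hkm : k ≤ m)
    (Fq FqN : Type) [Field Fq] [Field FqN] [Algebra Fq FqN]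
    [Fintype Fq]
    (hcard : Fintype.card Fq = q)
    (g : Fin m → FqN) (hg : LinearIndependent Fq g)
    (G : Fin s → Finset (Fin m))
    (enc : (Fin k → FqN) → (Fin m ⊕ Fin s) → FqN)
    (henc : ∀ a : Fin k → FqN,
      enc a = Sum.elim (fun l : Fin m => ∑ i : Fin k, a i * g l ^ q ^ (i : ℕ))
        (fun i' : Fin s => ∑ i : Fin k, a i * (∑ l ∈ G i', g l) ^ q ^ (i : ℕ)))
    (Cloc : Set ((Fin m ⊕ Fin s) → FqN))
    (hCloc : Cloc = {c | ∃ a : Fin k → FqN, c = enc a}) :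
    (∀ a : Fin k → FqN, a ≠ 0 → m - k + 1 ≤ rankWeight Fq (enc a)) ∧
      (2 * t + 1 ≤ m - k + 1 →
        ∀ c ∈ Cloc, ∀ (e : Fin t → FqN) (B : Matrix (Fin t) (Fin m ⊕ Fin s) Fq),
          rankWeight Fq
              (fun x : Fin m ⊕ Fin s => ∑ i : Fin t, e i * algebraMap Fq FqN (B i x)) ≤ t ∧
            ∀ c' ∈ Cloc,
              rankWeight Fq
                  ((fun x : Fin m ⊕ Fin s =>
                    c x + ∑ i : Fin t, e i * algebraMap Fq FqN (B i x)) - c') ≤ t →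
              c' = c) := by
  subst hcard hCloc
  have henc_inl (a : Fin k → FqN) : enc a ∘ Sum.inl = linearizedMap Fq a ∘ g := by
    rw [henc]
    exact funext fun l => (linearizedMap_apply a (g l)).symm
  have hweight (a : Fin k → FqN) (ha : a ≠ 0) : m - k + 1 ≤ rankWeight Fq (enc a) :=
    (henc_inl a ▸ sub_add_one_le_rankWeight_linearizedMap hkm hg ha).trans
      (rankWeight_comp_le _ _)
  have henc_sub (a a' : Fin k → FqN) : enc a - enc a' = enc (a - a') := by
    simp only [henc]
    funext x
    cases x <;> simp [sub_mul, Finset.sum_sub_distrib]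
  refine ⟨hweight, fun hδ c hc e B => ?_⟩
  have herror : rankWeight Fq (fun x => ∑ i, e i * algebraMap Fq FqN (B i x)) ≤ t :=
    (rankWeight_sum_mul_algebraMap_le e B).trans
      ((rankWeight_le_card e).trans_eq (Fintype.card_fin t))
  refine ⟨herror, fun c' hc' hclose => eq_of_rankWeight_sub_le ?_ hc' hc hclose ?_⟩
  · rintro _ ⟨a, rfl⟩ _ ⟨a', rfl⟩ hne
    rw [henc_sub]
    exact hδ.trans (hweight _ (sub_ne_zero.mpr fun h => hne (h ▸ rfl)))
  · simpa [Pi.sub_def] using herror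

/-- For the locally repairable code `C^loc` built from a Gabidulin code with
`F_q`-linearly independent evaluation points `g_1, …, g_m` (with `k ≤ m ≤ N`), repair groups
`G_1, …, G_s` partitioning `{1, …, m}` and parity points `p_i = ∑_{l ∈ G_i} g_l`:
(1) every extended codeword `(f(g_1), …, f(g_m), f(p_1), …, f(p_s))` of a nonzero
linearized polynomial `f` of q-degree at most `k - 1` has rank weight at least `m - k + 1`;
(2) consequently, if `δ = m - k + 1 ≥ 2t + 1`, then for any codeword `c ∈ C^loc`, any
`e ∈ (F_{q^N})^t` and any `t × (m + s)` matrix `B` over `F_q`, `c` is the unique codeword of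
`C^loc` at rank distance at most `t` from `c + eB`; i.e. `C^loc` tolerates up to `t` static
adversarial errors. -/
theorem locally_repairable_code_static_error_tolerance
    (q N m s k t : ℕ) (hq : ∃ p e : ℕ, p.Prime ∧ 0 < e ∧ q = p ^ e)
    (hkm : k ≤ m) (hmN : m ≤ N)
    (Fq FqN : Type) [Field Fq] [Field FqN] [Algebra Fq FqN]
    [Fintype Fq] [Fintype FqN]
    (hcard : Fintype.card Fq = q) (hcardN : Fintype.card FqN = q ^ N)
    (g : Fin m → FqN) (hg : LinearIndependent Fq g)
    (G : Fin s → Finset (Fin m))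
    (hdisj : ∀ i j : Fin s, i ≠ j → Disjoint (G i) (G j))
    (hcover : Finset.univ.biUnion G = (Finset.univ : Finset (Fin m)))
    (enc : (Fin k → FqN) → (Fin m ⊕ Fin s) → FqN)
    (henc : ∀ a : Fin k → FqN,
      enc a = Sum.elim (fun l : Fin m => ∑ i : Fin k, a i * g l ^ q ^ (i : ℕ))
        (fun i' : Fin s => ∑ i : Fin k, a i * (∑ l ∈ G i', g l) ^ q ^ (i : ℕ)))
    (Cloc : Set ((Fin m ⊕ Fin s) → FqN))
    (hCloc : Cloc = {c | ∃ a : Fin k → FqN, c = enc a}) :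
    (∀ a : Fin k → FqN, a ≠ 0 → m - k + 1 ≤ rankWeight Fq (enc a)) ∧
      (2 * t + 1 ≤ m - k + 1 →
        ∀ c ∈ Cloc, ∀ (e : Fin t → FqN) (B : Matrix (Fin t) (Fin m ⊕ Fin s) Fq),
          rankWeight Fq
              (fun x : Fin m ⊕ Fin s => ∑ i : Fin t, e i * algebraMap Fq FqN (B i x)) ≤ t ∧
            ∀ c' ∈ Cloc,
              rankWeight Fq
                  ((fun x : Fin m ⊕ Fin s =>
                    c x + ∑ i : Fin t, e i * algebraMap Fq FqN (B i x)) - c') ≤ t →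
              c' = c) :=
  locally_repairable_code_static_error_tolerance_general q m s k t hkm Fq FqN hcard g hg G enc henc
    Cloc hCloc
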